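/- Define the persistent hierarchy h(t) = β_0^t / #P^t, where β_0^t is the number of connected components of the MCF complex K^t and #P^t the number of clusters of P^t. Then h(t) = 1 for all t ≥ t_1 if and only if the sequence of partitions P^{t_1} ≤ P^{t_2} ≤ ... ≤ P^{t_M} is strictly hierarchical (each partition refines the next). -/

import Mathlib

/-!
Every part of `P^{t_m}` is a clique of the 1-skeleton of `K^{t_m}`, so sending a part to the
component containing it is a surjection from the parts onto the components: `β₀ ≤ #P`, with
equality exactly when no edge of `K^{t_m}` joins two different parts of `P^{t_m}`. The edges of
`K^{t_m}` come from the parts of the earlier partitions `P^{t_s}`, `s ≤ m`, so this says that each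
of them lies inside a part of `P^{t_m}`, i.e. that `P^{t_s}` refines `P^{t_m}`.
-/

open Finset

/-- The 1-skeleton graph of the MCF complex `K^T`. -/
def mcfGraph {X : Type*} [Fintype X] [DecidableEq X] {M : ℕ}
    (P : Fin M → Finpartition (univ : Finset X)) (t : Fin M → ℝ) (T : ℝ) :
    SimpleGraph X where
  Adj x y := x ≠ y ∧ ∃ s, t s ≤ T ∧ ∃ C ∈ (P s).parts, x ∈ C ∧ y ∈ C
  symm := by
    constructor
    rintro x y ⟨hxy, s, hs, C, hC, hx, hy⟩
    exact ⟨hxy.symm, s, hs, C, hC, hy, hx⟩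
  loopless := ⟨fun x h => h.1 rfl⟩

/-- The persistent hierarchy `h(t) = β₀ᵗ / #Pᵗ` of the MCF. -/
noncomputable def persistentHierarchy {X : Type*} [Fintype X] [DecidableEq X] {M : ℕ}
    (P : Fin M → Finpartition (univ : Finset X)) (t : Fin M → ℝ) (m : Fin M) : ℝ :=
  (Nat.card (mcfGraph P t (t m)).ConnectedComponent : ℝ) / (P m).parts.card

namespace Finpartition

variable {α : Type*} [DecidableEq α] {s : Finset α}

theorem le_iff_forall_part_eq {P Q : Finpartition s} :
    P ≤ Q ↔ ∀ C ∈ P.parts, ∀ x ∈ C, ∀ y ∈ C, Q.part x = Q.part y := by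
  constructor
  · intro hPQ C hC x hx y hy
    obtain ⟨B, hB, hCB⟩ := hPQ hC
    rw [Q.part_eq_of_mem hB (hCB hx), Q.part_eq_of_mem hB (hCB hy)]
  · intro h C hC
    obtain ⟨x, hx⟩ := P.nonempty_of_mem_parts hC
    refine ⟨Q.part x, Q.part_mem.2 (P.le hC hx), fun y hy => ?_⟩
    rw [h C hC x hx y hy]
    exact Q.mem_part (P.le hC hy)

end Finpartition

namespace SimpleGraph

variable {V : Type*} (G : SimpleGraph V)

theorem reachable_imp_eq_iff_adj_imp_eq {β : Type*} (f : V → β) :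
    (∀ x y, G.Reachable x y → f x = f y) ↔ ∀ x y, G.Adj x y → f x = f y := by
  refine ⟨fun h x y hxy => h x y hxy.reachable, fun h x y hxy => ?_⟩
  obtain ⟨w⟩ := hxy
  induction w with
  | nil => rfl
  | cons hadj _ ih => exact (h _ _ hadj).trans ih

variable [Fintype V] [DecidableEq V] (Q : Finpartition (univ : Finset V))

noncomputable def componentOfPart : Q.parts → G.ConnectedComponent :=
  fun C => G.connectedComponentMk (Q.nonempty_of_mem_parts C.2).choose

variable {G Q} (hQ : ∀ C ∈ Q.parts, ∀ x ∈ C, ∀ y ∈ C, G.Reachable x y)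
include hQ

theorem componentOfPart_part (x : V) :
    G.componentOfPart Q ⟨Q.part x, Q.part_mem.2 (mem_univ x)⟩ = G.connectedComponentMk x := by
  have hx := Q.part_mem.2 (mem_univ x)
  exact ConnectedComponent.sound <|
    hQ _ hx _ (Q.nonempty_of_mem_parts hx).choose_spec _ (Q.mem_part (mem_univ x))

theorem componentOfPart_surjective : Function.Surjective (G.componentOfPart Q) := by
  rintro ⟨x⟩
  exact ⟨_, componentOfPart_part hQ x⟩

theorem componentOfPart_injective_iff :
    Function.Injective (G.componentOfPart Q) ↔
      ∀ x y, G.Reachable x y → Q.part x = Q.part y := by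
  constructor
  · intro hinj x y hxy
    refine congrArg Subtype.val
      (@hinj ⟨_, Q.part_mem.2 (mem_univ x)⟩ ⟨_, Q.part_mem.2 (mem_univ y)⟩ ?_)
    rw [componentOfPart_part hQ, componentOfPart_part hQ]
    exact ConnectedComponent.sound hxy
  · rintro h ⟨C, hC⟩ ⟨D, hD⟩ hCD
    obtain ⟨x, hx⟩ := Q.nonempty_of_mem_parts hC
    obtain ⟨y, hy⟩ := Q.nonempty_of_mem_parts hD
    obtain rfl := Q.part_eq_of_mem hC hx
    obtain rfl := Q.part_eq_of_mem hD hy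
    rw [componentOfPart_part hQ, componentOfPart_part hQ] at hCD
    exact Subtype.ext (h x y (ConnectedComponent.exact hCD))

theorem card_connectedComponent_eq_card_parts_iff :
    Nat.card G.ConnectedComponent = #Q.parts ↔
      ∀ x y, G.Reachable x y → Q.part x = Q.part y := by
  rw [← componentOfPart_injective_iff hQ, ← Nat.card_eq_finsetCard, eq_comm]
  have hsurj := componentOfPart_surjective hQ
  exact ⟨fun hcard => ((Nat.bijective_iff_surjective_and_card _).2 ⟨hsurj, hcard⟩).1,
    fun hinj => ((Nat.bijective_iff_surjective_and_card _).1 ⟨hinj, hsurj⟩).2⟩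

end SimpleGraph

section MCF

variable {X : Type*} [Fintype X] [DecidableEq X] {M : ℕ}
  (P : Fin M → Finpartition (univ : Finset X)) {t : Fin M → ℝ}

theorem mcfGraph_reachable_of_mem_parts {T : ℝ} {s : Fin M} (hs : t s ≤ T) :
    ∀ C ∈ (P s).parts, ∀ x ∈ C, ∀ y ∈ C, (mcfGraph P t T).Reachable x y := by
  intro C hC x hx y hy
  by_cases hxy : x = y
  · exact hxy ▸ SimpleGraph.Reachable.refl x
  · exact SimpleGraph.Adj.reachable ⟨hxy, s, hs, C, hC, hx, hy⟩

theorem mcfGraph_reachable_imp_part_eq_iff (ht : StrictMono t) (m : Fin M) :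
    (∀ x y, (mcfGraph P t (t m)).Reachable x y → (P m).part x = (P m).part y) ↔
      ∀ s ≤ m, P s ≤ P m := by
  simp_rw [SimpleGraph.reachable_imp_eq_iff_adj_imp_eq, Finpartition.le_iff_forall_part_eq]
  constructor
  · intro h s hs C hC x hx y hy
    by_cases hxy : x = y
    · rw [hxy]
    · exact h x y ⟨hxy, s, ht.monotone hs, C, hC, hx, hy⟩
  · rintro h x y ⟨-, s, hs, C, hC, hx, hy⟩
    exact h s (ht.le_iff_le.1 hs) C hC x hx y hy

theorem persistentHierarchy_eq_one_iff [Nonempty X] (m : Fin M) :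
    persistentHierarchy P t m = 1 ↔
      Nat.card (mcfGraph P t (t m)).ConnectedComponent = #(P m).parts := by
  have hparts : (#(P m).parts : ℝ) ≠ 0 :=
    Nat.cast_ne_zero.2 (card_ne_zero.2 ((P m).parts_nonempty univ_nonempty.ne_empty))
  rw [persistentHierarchy, div_eq_one_iff_eq hparts, Nat.cast_inj]

end MCF

/-- `h(t) ≡ 1` iff the sequence of partitions is strictly hierarchical,
i.e. each partition refines the later ones. -/
theorem persistentHierarchy_eq_one_iff_hierarchical
    {X : Type*} [Fintype X] [DecidableEq X] [Nonempty X] {M : ℕ}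
    (P : Fin M → Finpartition (univ : Finset X)) (t : Fin M → ℝ) (ht : StrictMono t) :
    (∀ m : Fin M, persistentHierarchy P t m = 1) ↔
      ∀ i j : Fin M, i ≤ j → P i ≤ P j := by
  have key (m : Fin M) : persistentHierarchy P t m = 1 ↔ ∀ s ≤ m, P s ≤ P m := by
    rw [persistentHierarchy_eq_one_iff,
      SimpleGraph.card_connectedComponent_eq_card_parts_iff
        (mcfGraph_reachable_of_mem_parts P le_rfl),
      mcfGraph_reachable_imp_part_eq_iff P ht]
  simp_rw [key]
  exact ⟨fun h i j hij => h j i hij, fun h m s hs => h s m hs⟩
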